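/- For every integer l ≥ 1, √(πl)/2 ≤ ∑_{k1 + k2 = l} (l!)^2 / ((2k1)! (2k2)!) ≤ (√(πl)/2) · e^{1/6 - 1/25}, where the sum is over nonnegative integers k1, k2 with k1 + k2 = l. -/

import Mathlib

/-!
By Pascal's rule the even-index entries of row `2l` of Pascal's triangle sum to `2^(2l-1)`, so
the sum equals `4^l / (2 C(2l, l))`. In terms of the Stirling sequence
`s n = n! / (√(2n) (n/e)^n)` one has `4^n / C(2n, n) = √n · s(n)² / s(2n)`. Since `s` decreases
to `√π`, `s(n)² / s(2n) ≥ s(n) ≥ √π`. Robbins' bound `log s(n) - log s(n+1) ≤ 1/(12n(n+1))`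
telescopes to `log s(n) ≤ log √π + 1/(12n)` and `log s(n) - log s(2n) ≤ 1/(24n)`, whence
`s(n)² / s(2n) ≤ √π e^(1/(8n))`; finally `1/8 < 1/6 - 1/25`.
-/

open Real Finset Filter Topology
open scoped Nat

theorem Finset.sum_range_two_mul {M : Type*} [AddCommMonoid M] (f : ℕ → M) (n : ℕ) :
    ∑ i ∈ range (2 * n), f i = ∑ k ∈ range n, (f (2 * k) + f (2 * k + 1)) := by
  induction n with
  | zero => simp
  | succ n ih => rw [mul_add_one, sum_range_succ, sum_range_succ, sum_range_succ, ih, add_assoc]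

theorem Nat.sum_antidiagonal_choose_two_mul {l : ℕ} (hl : l ≠ 0) :
    ∑ p ∈ antidiagonal l, (2 * l).choose (2 * p.1) = 2 ^ (2 * l - 1) := by
  obtain ⟨n, rfl⟩ := Nat.exists_eq_succ_of_ne_zero hl
  rw [show 2 * (n + 1) - 1 = 2 * n + 1 by omega]
  calc ∑ p ∈ antidiagonal (n + 1), (2 * (n + 1)).choose (2 * p.1)
      = ∑ k ∈ range (n + 1), ((2 * n + 1).choose (2 * k + 1) + (2 * n + 1).choose (2 * k + 2))
          + (2 * n + 1).choose 0 := by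
        simp [Finset.Nat.sum_antidiagonal_eq_sum_range_succ_mk, sum_range_succ' _ (n + 1),
          Nat.choose_succ_succ', mul_add]
    _ = ∑ i ∈ range (2 * n + 3), (2 * n + 1).choose i := by
        rw [sum_range_succ' _ (2 * n + 2), show 2 * n + 2 = 2 * (n + 1) by ring, sum_range_two_mul]
    _ = 2 ^ (2 * n + 1) := by
        rw [sum_range_succ, Nat.choose_eq_zero_of_lt (by omega), add_zero, Nat.sum_range_choose]

theorem Nat.cast_centralBinom (n : ℕ) : (n.centralBinom : ℝ) = (2 * n)! / n ! ^ 2 := by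
  rw [Nat.centralBinom_eq_two_mul_choose, two_mul, Nat.cast_add_choose, sq]

theorem sum_antidiagonal_sq_factorial_div_eq {l : ℕ} (hl : l ≠ 0) :
    ∑ p ∈ antidiagonal l, (l ! : ℝ) ^ 2 / ((2 * p.1)! * (2 * p.2)!)
      = 4 ^ l / l.centralBinom / 2 := by
  have hterm : ∀ p ∈ antidiagonal l, (l ! : ℝ) ^ 2 / ((2 * p.1)! * (2 * p.2)!)
      = (2 * l).choose (2 * p.1) / l.centralBinom := by
    rintro ⟨a, b⟩ hab
    rw [HasAntidiagonal.mem_antidiagonal] at hab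
    subst hab
    rw [Nat.cast_centralBinom, mul_add, Nat.cast_add_choose]
    field_simp
  have hfour : (4 : ℝ) ^ l = 2 * 2 ^ (2 * l - 1) := by
    rw [← pow_succ', Nat.sub_add_cancel (by omega), pow_mul]
    norm_num
  rw [sum_congr rfl hterm, ← sum_div, ← Nat.cast_sum, Nat.sum_antidiagonal_choose_two_mul hl, hfour]
  push_cast
  ring

namespace Stirling

theorem stirlingSeq_pos {n : ℕ} (hn : n ≠ 0) : 0 < stirlingSeq n :=
  (sqrt_pos.2 pi_pos).trans_le (sqrt_pi_le_stirlingSeq hn)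

theorem four_pow_div_centralBinom_eq {n : ℕ} (hn : n ≠ 0) :
    (4 ^ n / n.centralBinom : ℝ) = stirlingSeq n ^ 2 / stirlingSeq (2 * n) * √n := by
  have hsqrt : √(2 * (2 * n : ℕ) : ℝ) = 2 * √n := by
    rw [show (2 * (2 * n : ℕ) : ℝ) = 2 ^ 2 * n by push_cast; ring, sqrt_mul (by positivity),
      sqrt_sq (by norm_num)]
  rw [Nat.cast_centralBinom, stirlingSeq, stirlingSeq, hsqrt]
  simp only [div_pow, mul_pow, sq_sqrt (by positivity : (0 : ℝ) ≤ 2 * n)]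
  push_cast
  rw [mul_pow, pow_mul]
  field_simp
  rw [sq_sqrt (Nat.cast_nonneg n)]
  ring

theorem monotone_log_stirlingSeq_sub_inv :
    Monotone fun n : ℕ => log (stirlingSeq (n + 1)) - 1 / (12 * ((n + 1 : ℕ) : ℝ)) := by
  refine monotone_nat_of_le_succ fun n => ?_
  have hrobbins := log_stirlingSeq_sdiff_le (n + 1)
  have htelescope : 1 / (12 * ((n + 1 : ℕ) : ℝ) * ((n + 1 : ℕ) + 1))
      = 1 / (12 * ((n + 1 : ℕ) : ℝ)) - 1 / (12 * ((n + 1 + 1 : ℕ) : ℝ)) := by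
    push_cast
    field_simp
    ring
  linarith

theorem log_stirlingSeq_sub_log_stirlingSeq_le {m n : ℕ} (hm : m ≠ 0) (hmn : m ≤ n) :
    log (stirlingSeq m) - log (stirlingSeq n) ≤ 1 / (12 * m) - 1 / (12 * n) := by
  obtain ⟨m, rfl⟩ := Nat.exists_eq_succ_of_ne_zero hm
  obtain ⟨n, rfl⟩ := Nat.exists_eq_succ_of_ne_zero (by omega : n ≠ 0)
  have := monotone_log_stirlingSeq_sub_inv (Nat.succ_le_succ_iff.mp hmn)
  linarith

theorem log_stirlingSeq_le {n : ℕ} (hn : n ≠ 0) :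
    log (stirlingSeq n) ≤ log √π + 1 / (12 * n) := by
  obtain ⟨n, rfl⟩ := Nat.exists_eq_succ_of_ne_zero hn
  have hlim : Tendsto (fun m : ℕ => log (stirlingSeq (m + 1)) - 1 / (12 * ((m + 1 : ℕ) : ℝ)))
      atTop (𝓝 (log √π - 0)) := by
    refine ((tendsto_stirlingSeq_sqrt_pi.comp (tendsto_add_atTop_nat 1)).log
      (by positivity)).sub (tendsto_const_nhds.div_atTop ?_)
    exact (tendsto_natCast_atTop_atTop.comp (tendsto_add_atTop_nat 1)).const_mul_atTop
      (by norm_num)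
  have := monotone_log_stirlingSeq_sub_inv.ge_of_tendsto hlim n
  linarith

theorem sqrt_pi_le_stirlingSeq_sq_div {n : ℕ} (hn : n ≠ 0) :
    √π ≤ stirlingSeq n ^ 2 / stirlingSeq (2 * n) := by
  obtain ⟨m, rfl⟩ := Nat.exists_eq_succ_of_ne_zero hn
  have hle : stirlingSeq (2 * (m + 1)) ≤ stirlingSeq (m + 1) :=
    stirlingSeq'_antitone (by omega : m ≤ 2 * m + 1)
  calc √π ≤ stirlingSeq (m + 1) := sqrt_pi_le_stirlingSeq hn
    _ ≤ stirlingSeq (m + 1) ^ 2 / stirlingSeq (2 * (m + 1)) := by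
      rw [le_div_iff₀ (stirlingSeq_pos (by omega)), sq]
      exact mul_le_mul_of_nonneg_left hle (stirlingSeq_pos hn).le

theorem stirlingSeq_sq_div_le {n : ℕ} (hn : n ≠ 0) :
    stirlingSeq n ^ 2 / stirlingSeq (2 * n) ≤ √π * exp (1 / (8 * n)) := by
  have hpos := stirlingSeq_pos hn
  have hpos2 := stirlingSeq_pos (by omega : 2 * n ≠ 0)
  rw [← log_le_log_iff (by positivity) (by positivity), log_div (by positivity) hpos2.ne',
    log_pow, log_mul (by positivity) (exp_pos _).ne', log_exp]
  have hlog := log_stirlingSeq_le hn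
  have hdiff := log_stirlingSeq_sub_log_stirlingSeq_le hn (by omega : n ≤ 2 * n)
  have hsplit : 1 / (12 * (n : ℝ)) - 1 / (12 * ((2 * n : ℕ) : ℝ)) = 1 / (8 * n) - 1 / (12 * n) := by
    push_cast
    field_simp
    ring
  push_cast at hsplit hdiff ⊢
  linarith

end Stirling

theorem Nat.sqrt_pi_mul_le_four_pow_div_centralBinom {n : ℕ} (hn : n ≠ 0) :
    √(π * n) ≤ 4 ^ n / n.centralBinom := by
  rw [Stirling.four_pow_div_centralBinom_eq hn, sqrt_mul pi_pos.le]
  exact mul_le_mul_of_nonneg_right (Stirling.sqrt_pi_le_stirlingSeq_sq_div hn) (sqrt_nonneg _)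

theorem Nat.four_pow_div_centralBinom_le {n : ℕ} (hn : n ≠ 0) :
    4 ^ n / n.centralBinom ≤ √(π * n) * exp (1 / (8 * n)) := by
  rw [Stirling.four_pow_div_centralBinom_eq hn, sqrt_mul pi_pos.le, mul_right_comm]
  exact mul_le_mul_of_nonneg_right (Stirling.stirlingSeq_sq_div_le hn) (sqrt_nonneg _)

/-- For every integer `l ≥ 1`,
`√(πl)/2 ≤ ∑_{k1+k2=l} (l!)²/((2k1)!(2k2)!) ≤ (√(πl)/2) e^{1/6 - 1/25}`. -/
theorem sum_sq_factorial_ratio_bounds (l : ℕ) (hl : 1 ≤ l) :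
    Real.sqrt (π * l) / 2
        ≤ ∑ p ∈ Finset.HasAntidiagonal.antidiagonal l,
            (l.factorial : ℝ) ^ 2 / (((2 * p.1).factorial : ℝ) * ((2 * p.2).factorial : ℝ)) ∧
      ∑ p ∈ Finset.HasAntidiagonal.antidiagonal l,
            (l.factorial : ℝ) ^ 2 / (((2 * p.1).factorial : ℝ) * ((2 * p.2).factorial : ℝ))
        ≤ Real.sqrt (π * l) / 2 * Real.exp (1 / 6 - 1 / 25) := by
  have hl0 : l ≠ 0 := by omega
  have hexp : exp (1 / (8 * l)) ≤ exp (1 / 6 - 1 / 25) := by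
    have : (1 : ℝ) ≤ l := by exact_mod_cast hl
    gcongr
    calc 1 / (8 * (l : ℝ)) ≤ 1 / 8 := by gcongr; linarith
      _ ≤ 1 / 6 - 1 / 25 := by norm_num
  rw [sum_antidiagonal_sq_factorial_div_eq hl0, div_mul_eq_mul_div]
  constructor
  · gcongr
    exact Nat.sqrt_pi_mul_le_four_pow_div_centralBinom hl0
  · gcongr
    grw [Nat.four_pow_div_centralBinom_le hl0, hexp]
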